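/- arXiv:1611.01675 — 7 statements merged into one kernel-verified Lean document; each statement's English description precedes it below -/
import Mathlib

section
/- For all n ≥ 1 and all p ∈ (0,1), if X_1, X_2, ... are i.i.d. Bernoulli(p) random variables and S_n = X_1 + ... + X_n, then the probability that there exists some n ∈ ℕ with (n+1) · C(n, S_n) · p^{S_n} (1-p)^{n-S_n} ≤ ε is at most ε, for any ε ∈ (0,1). -/
open MeasureTheory ProbabilityTheory Finset

/-- The binomial probability mass function `b(n,p,x) = C(n,x) p^x (1-p)^(n-x)`. -/
noncomputable def binomPMF (n : ℕ) (p : ℝ) (x : ℕ) : ℝ :=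
  (n.choose x : ℝ) * p ^ x * (1 - p) ^ (n - x)

/-!
Robbins' mixture argument. Averaging the Bernoulli(q) law of the first `n` observations over
`q` uniform on `[0,1]` gives each word with `k` ones the mass
`∫₀¹ q^k (1-q)^(n-k) dq = 1 / ((n+1) C(n,k))`, so `1 / ((n+1) b(n,p,S_n))` is the likelihood
ratio of this mixture against Bernoulli(p). Stop at the first `n` where `(n+1) b(n,p,S_n) ≤ ε`:
every stopped word has probability at most `ε` times its mixture mass, and since the mixture is
consistent under extension of words, the stopped words, which are prefix-free, have total mixture
mass at most `1`.
-/

noncomputable def betaWeight (n k : ℕ) : ℝ :=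
  (((n : ℝ) + 1) * n.choose k)⁻¹

lemma betaWeight_nonneg (n k : ℕ) : 0 ≤ betaWeight n k := by
  unfold betaWeight; positivity

lemma betaWeight_add_betaWeight_succ {n k : ℕ} (hk : k ≤ n) :
    betaWeight (n + 1) k + betaWeight (n + 1) (k + 1) = betaWeight n k := by
  have hA : ((n + 1).choose k : ℝ) * (n + 1 - k) = n.choose k * (n + 1) := by
    have h := congrArg (Nat.cast (R := ℝ)) (Nat.choose_mul_succ_eq n k)
    push_cast [Nat.cast_sub (show k ≤ n + 1 by omega)] at h
    exact h.symm
  have hB : ((n + 1).choose (k + 1) : ℝ) * (k + 1) = (n + 1) * n.choose k := by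
    exact_mod_cast (Nat.add_one_mul_choose_eq n k).symm
  have hC : (n.choose k : ℝ) ≠ 0 := by exact_mod_cast (Nat.choose_pos hk).ne'
  have hA0 : ((n + 1).choose k : ℝ) ≠ 0 := by exact_mod_cast (Nat.choose_pos (by omega)).ne'
  have hB0 : ((n + 1).choose (k + 1) : ℝ) ≠ 0 := by exact_mod_cast (Nat.choose_pos (by omega)).ne'
  unfold betaWeight
  push_cast
  field_simp
  linear_combination -(((n + 1).choose (k + 1) : ℝ) * hA + ((n + 1).choose k : ℝ) * hB)

lemma succ_mul_binomPMF_mul_betaWeight {n k : ℕ} (hk : k ≤ n) (p : ℝ) :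
    ((n : ℝ) + 1) * binomPMF n p k * betaWeight n k = p ^ k * (1 - p) ^ (n - k) := by
  have hC : (0 : ℝ) < n.choose k := by exact_mod_cast Nat.choose_pos hk
  unfold binomPMF betaWeight
  field_simp

def onesBefore {n : ℕ} (v : Fin n → Bool) (m : ℕ) : ℕ :=
  ∑ i ∈ range m, if h : i < n then (v ⟨i, h⟩).toNat else 0

lemma onesBefore_le {n : ℕ} (v : Fin n → Bool) (m : ℕ) : onesBefore v m ≤ m := by
  refine (sum_le_card_nsmul _ _ 1 fun _ _ => ?_).trans (by simp)
  split <;> simp [Bool.toNat_le]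

lemma onesBefore_snoc_of_le {n m : ℕ} (v : Fin n → Bool) (b : Bool) (hm : m ≤ n) :
    onesBefore (Fin.snoc v b : Fin (n + 1) → Bool) m = onesBefore v m := by
  refine sum_congr rfl fun i hi => ?_
  have hi : i < n := (mem_range.1 hi).trans_le hm
  simp [hi, Nat.lt_succ_of_lt hi, Fin.snoc, Fin.castLT]

lemma onesBefore_snoc_self {n : ℕ} (v : Fin n → Bool) (b : Bool) :
    onesBefore (Fin.snoc v b : Fin (n + 1) → Bool) (n + 1) = onesBefore v n + b.toNat := by
  rw [onesBefore, sum_range_succ, ← onesBefore, onesBefore_snoc_of_le v b le_rfl,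
    dif_pos n.lt_succ_self]
  exact congrArg (fun x => onesBefore v n + x.toNat) (Fin.snoc_last (α := fun _ => Bool) _ _)

lemma onesBefore_restrict {n m : ℕ} (β : ℕ → Bool) (hm : m ≤ n) :
    onesBefore (fun i : Fin n => β i) m = ∑ i ∈ range m, (β i).toNat :=
  sum_congr rfl fun _ hi => dif_pos ((mem_range.1 hi).trans_le hm)

lemma onesBefore_self {n : ℕ} (v : Fin n → Bool) : onesBefore v n = ∑ i, (v i).toNat := by
  rw [onesBefore, Finset.sum_range]
  exact sum_congr rfl fun i _ => dif_pos i.isLt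

lemma prod_ite_eq_pow_onesBefore {n : ℕ} (v : Fin n → Bool) (p : ℝ) :
    ∏ i, (if v i then p else 1 - p) = p ^ onesBefore v n * (1 - p) ^ (n - onesBefore v n) := by
  have hcard : #{i | v i} = onesBefore v n := by
    rw [onesBefore_self, card_filter]
    exact sum_congr rfl fun i _ => by cases v i <;> rfl
  rw [prod_ite, prod_const, prod_const, hcard, ← hcard, filter_not, card_sdiff_of_subset
    (filter_subset _ _), card_univ, Fintype.card_fin]

section Stopping

variable (c : ℕ → ℕ → Prop)

def Survives {n : ℕ} (v : Fin n → Bool) : Prop :=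
  ∀ m < n, ¬ c m (onesBefore v m)

def StopsAt {n : ℕ} (v : Fin n → Bool) : Prop :=
  Survives c v ∧ c n (onesBefore v n)

lemma exists_stopsAt {β : ℕ → Bool}
    (h : ∃ n, c n (∑ i ∈ range n, (β i).toNat)) : ∃ n, StopsAt c (fun i : Fin n => β i) := by
  classical
  refine ⟨Nat.find h, fun m hm hc => Nat.find_min h hm ?_, ?_⟩
  · rwa [onesBefore_restrict β hm.le] at hc
  · rw [onesBefore_restrict β le_rfl]
    exact Nat.find_spec h

lemma survives_snoc_iff {n : ℕ} (v : Fin n → Bool) (b : Bool) :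
    Survives c (Fin.snoc v b : Fin (n + 1) → Bool) ↔ Survives c v ∧ ¬ c n (onesBefore v n) := by
  simp only [Survives, Nat.lt_succ_iff_lt_or_eq, or_imp, forall_and, forall_eq]
  rw [onesBefore_snoc_of_le v b le_rfl]
  exact and_congr (forall₂_congr fun m hm => by rw [onesBefore_snoc_of_le v b hm.le]) Iff.rfl

variable (w : ℕ → ℕ → ℝ)

open Classical in
noncomputable def survivingMass (n : ℕ) : ℝ :=
  ∑ v : Fin n → Bool with Survives c v, w n (onesBefore v n)

open Classical in
noncomputable def stoppingMass (n : ℕ) : ℝ :=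
  ∑ v : Fin n → Bool with StopsAt c v, w n (onesBefore v n)

variable {w}

lemma stoppingMass_add_survivingMass_succ
    (hw : ∀ n k, k ≤ n → w (n + 1) k + w (n + 1) (k + 1) = w n k) (n : ℕ) :
    stoppingMass c w n + survivingMass c w (n + 1) = survivingMass c w n := by
  classical
  have hsplit : ∀ F : (Fin (n + 1) → Bool) → ℝ,
      ∑ u, F u = ∑ v : Fin n → Bool, ∑ b : Bool, F (Fin.snoc v b) := by
    intro F
    rw [← (Fin.snocEquiv fun _ => Bool).sum_comp, Fintype.sum_prod_type, sum_comm]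
    rfl
  have hsucc : survivingMass c w (n + 1)
      = ∑ v : Fin n → Bool with Survives c v ∧ ¬ c n (onesBefore v n), w n (onesBefore v n) := by
    rw [survivingMass, sum_filter, hsplit, sum_filter]
    refine sum_congr rfl fun v _ => ?_
    simp only [survives_snoc_iff, onesBefore_snoc_self, Fintype.sum_bool, Bool.toNat_true,
      Bool.toNat_false, add_zero]
    split_ifs
    · rw [add_comm, hw _ _ (onesBefore_le v n)]
    · simp
  rw [hsucc, stoppingMass, survivingMass,
    ← sum_filter_add_sum_filter_not (univ.filter (Survives c)) (fun v => c n (onesBefore v n)),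
    filter_filter, filter_filter]
  simp only [StopsAt]
  congr

lemma sum_stoppingMass_add_survivingMass
    (hw : ∀ n k, k ≤ n → w (n + 1) k + w (n + 1) (k + 1) = w n k) (N : ℕ) :
    ∑ n ∈ range N, stoppingMass c w n + survivingMass c w N = w 0 0 := by
  induction N with
  | zero => simp [survivingMass, Survives, onesBefore]
  | succ N ih => rw [sum_range_succ, add_assoc, stoppingMass_add_survivingMass_succ c hw, ih]

lemma sum_stoppingMass_le (hw : ∀ n k, k ≤ n → w (n + 1) k + w (n + 1) (k + 1) = w n k)
    (hw₀ : ∀ n k, 0 ≤ w n k) (N : ℕ) :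
    ∑ n ∈ range N, stoppingMass c w n ≤ w 0 0 := by
  rw [← sum_stoppingMass_add_survivingMass c hw N, le_add_iff_nonneg_right]
  exact sum_nonneg fun v _ => hw₀ _ _

lemma tsum_ofReal_mul_stoppingMass_le
    (hw : ∀ n k, k ≤ n → w (n + 1) k + w (n + 1) (k + 1) = w n k) (hw₀ : ∀ n k, 0 ≤ w n k)
    {ε : ℝ} (hε : 0 ≤ ε) :
    ∑' n, ENNReal.ofReal (ε * stoppingMass c w n) ≤ ENNReal.ofReal (ε * w 0 0) := by
  have hmass : ∀ n, 0 ≤ stoppingMass c w n := fun n => sum_nonneg fun _ _ => hw₀ _ _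
  refine ENNReal.tsum_le_of_sum_range_le fun N => ?_
  rw [← ENNReal.ofReal_sum_of_nonneg fun n _ => mul_nonneg hε (hmass n), ← mul_sum]
  exact ENNReal.ofReal_le_ofReal (mul_le_mul_of_nonneg_left (sum_stoppingMass_le c hw hw₀ N) hε)

end Stopping

section Bernoulli

variable {Ω : Type*} [MeasureSpace Ω] [IsProbabilityMeasure (ℙ : Measure Ω)] {p : ℝ}

lemma measure_preimage_bool {B : Ω → Bool} (hB : Measurable B) (hp : 0 ≤ p)
    (hdist : ℙ {ω | B ω = true} = ENNReal.ofReal p) (b : Bool) :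
    ℙ (B ⁻¹' {b}) = ENNReal.ofReal (if b then p else 1 - p) := by
  cases b
  · have hcompl : B ⁻¹' {false} = (B ⁻¹' {true})ᶜ := by ext; simp
    rw [hcompl, prob_compl_eq_one_sub (hB (measurableSet_singleton true)),
      show B ⁻¹' {true} = {ω | B ω = true} from rfl, hdist,
      if_neg Bool.false_ne_true, ENNReal.ofReal_sub _ hp, ENNReal.ofReal_one]
  · exact hdist

variable {B : ℕ → Ω → Bool}

lemma measure_word_eq (hB : ∀ i, Measurable (B i)) (hind : iIndepFun B ℙ) (hp : p ∈ Set.Icc 0 1)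
    (hdist : ∀ i, ℙ {ω | B i ω = true} = ENNReal.ofReal p) {n : ℕ} (v : Fin n → Bool) :
    ℙ ((fun ω (i : Fin n) => B i ω) ⁻¹' {v})
      = ENNReal.ofReal (p ^ onesBefore v n * (1 - p) ^ (n - onesBefore v n)) := by
  have hcyl : (fun ω (i : Fin n) => B i ω) ⁻¹' {v} =
      ⋂ i ∈ (univ : Finset (Fin n)), B i ⁻¹' {v i} := by
    ext ω; simp [funext_iff]
  rw [hcyl, (hind.precomp Fin.val_injective).measure_inter_preimage_eq_mul _
    fun i _ => measurableSet_singleton _, ← prod_ite_eq_pow_onesBefore,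
    ENNReal.ofReal_prod_of_nonneg fun i _ => by split <;> linarith [hp.1, hp.2]]
  exact prod_congr rfl fun i _ => measure_preimage_bool (hB i) hp.1 (hdist i) (v i)

lemma measure_stopsAt_le (hB : ∀ i, Measurable (B i)) (hind : iIndepFun B ℙ)
    (hp : p ∈ Set.Icc 0 1) (hdist : ∀ i, ℙ {ω | B i ω = true} = ENNReal.ofReal p)
    (c : ℕ → ℕ → Prop) (w : ℕ → ℕ → ℝ) (ε : ℝ) {n : ℕ}
    (hc : ∀ k ≤ n, c n k → p ^ k * (1 - p) ^ (n - k) ≤ ε * w n k) :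
    ℙ {ω | StopsAt c (fun i : Fin n => B i ω)} ≤ ENNReal.ofReal (ε * stoppingMass c w n) := by
  classical
  have hpath : Measurable fun ω (i : Fin n) => B i ω := measurable_pi_lambda _ fun i => hB i
  have hevent : {ω | StopsAt c (fun i : Fin n => B i ω)}
      = (fun ω (i : Fin n) => B i ω) ⁻¹' ↑(univ.filter fun v : Fin n → Bool => StopsAt c v) := by
    ext; simp
  rw [hevent, ← sum_measure_preimage_singleton _ fun v _ => hpath (measurableSet_singleton v)]
  simp only [measure_word_eq hB hind hp hdist]
  rw [← ENNReal.ofReal_sum_of_nonneg fun v _ => by have := hp.2; have := hp.1; positivity,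
    stoppingMass, mul_sum]
  exact ENNReal.ofReal_le_ofReal (sum_le_sum fun v hv =>
    hc _ (onesBefore_le v n) (mem_filter.1 hv).2.2)

end Bernoulli

lemma toNat_decide_eq_one {k : ℕ} (hk : k ≤ 1) : (decide (k = 1)).toNat = k := by
  interval_cases k <;> rfl

/-- Robbins (1970) confidence sequence inequality: for i.i.d. Bernoulli(p) variables
`X i` with partial sums `S n`, the probability that `(n+1) b(n,p,S_n) ≤ ε` for some `n ≥ 1`
is at most `ε`. -/
theorem stmt0
    (Ω : Type*) [MeasureSpace Ω] [IsProbabilityMeasure (ℙ : Measure Ω)]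
    (p ε : ℝ) (hp : p ∈ Set.Ioo (0:ℝ) 1) (hε : ε ∈ Set.Ioo (0:ℝ) 1)
    (X : ℕ → Ω → ℕ)
    (hmeas : ∀ i, Measurable (X i))
    (hindep : iIndepFun X ℙ)
    (hval : ∀ i ω, X i ω ≤ 1)
    (hdist : ∀ i, ℙ {ω | X i ω = 1} = ENNReal.ofReal p) :
    ℙ {ω | ∃ n : ℕ, 1 ≤ n ∧
        ((n : ℝ) + 1) * binomPMF n p (∑ i ∈ Finset.range n, X i ω) ≤ ε}
      ≤ ENNReal.ofReal ε := by
  set c : ℕ → ℕ → Prop := fun n k => 1 ≤ n ∧ ((n : ℝ) + 1) * binomPMF n p k ≤ ε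
  set B : ℕ → Ω → Bool := fun i ω => decide (X i ω = 1)
  have hB : ∀ i, Measurable (B i) := fun i =>
    (measurable_from_nat (f := fun k => decide (k = 1))).comp (hmeas i)
  have hBind : iIndepFun B ℙ := hindep.comp (fun _ k => decide (k = 1)) fun _ => measurable_from_nat
  have hBdist : ∀ i, ℙ {ω | B i ω = true} = ENNReal.ofReal p := by simpa [B] using hdist
  have hsum : ∀ n ω, ∑ i ∈ range n, X i ω = ∑ i ∈ range n, (B i ω).toNat := fun n ω =>
    sum_congr rfl fun i _ => (toNat_decide_eq_one (hval i ω)).symm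
  have hc : ∀ n, ∀ k ≤ n, c n k → p ^ k * (1 - p) ^ (n - k) ≤ ε * betaWeight n k := by
    rintro n k hk ⟨-, hle⟩
    rw [← succ_mul_binomPMF_mul_betaWeight hk]
    exact mul_le_mul_of_nonneg_right hle (betaWeight_nonneg n k)
  calc ℙ {ω | ∃ n, c n (∑ i ∈ range n, X i ω)}
      ≤ ℙ (⋃ n, {ω | StopsAt c (fun i : Fin n => B i ω)}) :=
        measure_mono fun ω ⟨n, hn⟩ =>
          Set.mem_iUnion.2 (exists_stopsAt c (β := fun j => B j ω) ⟨n, hsum n ω ▸ hn⟩)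
    _ ≤ ∑' n, ℙ {ω | StopsAt c (fun i : Fin n => B i ω)} := measure_iUnion_le _
    _ ≤ ∑' n, ENNReal.ofReal (ε * stoppingMass c betaWeight n) := ENNReal.tsum_le_tsum fun n =>
        measure_stopsAt_le hB hBind (Set.Ioo_subset_Icc_self hp) hBdist c betaWeight ε (hc n)
    _ ≤ ENNReal.ofReal ε := by
        simpa [betaWeight] using tsum_ofReal_mul_stoppingMass_le c
          (fun n k hk => betaWeight_add_betaWeight_succ hk) betaWeight_nonneg hε.1.le
end

section
/- Let α ∈ (0,1), ε ∈ (0,1), and n ∈ ℕ. Define l_n = min{k ∈ {0,...,n} : (n+1)·b(n,α,k) > ε} − 1, where b(n,α,k) = C(n,k) α^k (1-α)^{n-k}. If the set {k : (n+1)·b(n,α,k) > ε} is nonempty (which holds whenever ε < 1), then l_n < α·n. -/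
/-! The maximum of `b(n, p, ·)` lies at `⌊(n + 1) p⌋`: the ratio identity below shows that
`b(n, p, ·)` is non-increasing from there on. So if the first index `m` with
`(n + 1) b(n, α, m) > ε` were at least `α n + 1`, then `b(n, α, m - 1) ≥ b(n, α, m)`, and `m - 1`
would already be such an index. -/

lemma binomPMF_nonneg {p : ℝ} (hp0 : 0 ≤ p) (hp1 : p ≤ 1) (n k : ℕ) : 0 ≤ binomPMF n p k := by
  unfold binomPMF
  have : 0 ≤ 1 - p := by linarith
  positivity

lemma binomPMF_succ_mul {n j : ℕ} (hj : j < n) (p : ℝ) :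
    binomPMF n p (j + 1) * ((j + 1) * (1 - p)) = binomPMF n p j * ((n - j) * p) := by
  have hchoose : (n.choose (j + 1) : ℝ) * (j + 1) = n.choose j * (n - j) := by
    have := congrArg (Nat.cast (R := ℝ)) (Nat.choose_succ_right_eq n j)
    push_cast [Nat.cast_sub hj.le] at this
    exact this
  have hexp : n - j = n - (j + 1) + 1 := by omega
  unfold binomPMF
  rw [hexp, pow_succ, pow_succ]
  linear_combination p ^ j * p * (1 - p) ^ (n - (j + 1)) * (1 - p) * hchoose

lemma binomPMF_succ_le {n j : ℕ} (hj : j < n) {p : ℝ} (hp0 : 0 ≤ p) (hp1 : p < 1)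
    (hmode : (n + 1) * p ≤ j + 1) : binomPMF n p (j + 1) ≤ binomPMF n p j := by
  have hpos : 0 < ((j : ℝ) + 1) * (1 - p) := by
    have : 0 < 1 - p := by linarith
    positivity
  refine le_of_mul_le_mul_right ?_ hpos
  rw [binomPMF_succ_mul hj]
  exact mul_le_mul_of_nonneg_left (by linarith) (binomPMF_nonneg hp0 hp1.le n j)

theorem stmt4_general (α ε : ℝ) (hα : α ∈ Set.Ioo (0:ℝ) 1) (n : ℕ)
    (S : Finset ℕ)
    (hS : S = {k ∈ Finset.range (n + 1) | ε < ((n : ℝ) + 1) * binomPMF n α k})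
    (hne : S.Nonempty) :
    ((S.min' hne : ℝ) - 1 : ℝ) < α * n := by
  obtain ⟨hα0, hα1⟩ := hα
  have hmS := S.min'_mem hne
  have hmin : ∀ k ∈ S, S.min' hne ≤ k := fun k hk => S.min'_le k hk
  generalize S.min' hne = m at hmS hmin ⊢
  subst hS
  rw [Finset.mem_filter, Finset.mem_range] at hmS
  by_contra! hm
  obtain ⟨j, rfl⟩ : ∃ j, m = j + 1 :=
    Nat.exists_eq_succ_of_ne_zero (by rintro rfl; push_cast at hm; nlinarith)
  push_cast at hm hmS
  have hjS : j ∈ {k ∈ Finset.range (n + 1) | ε < ((n : ℝ) + 1) * binomPMF n α k} := by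
    refine Finset.mem_filter.mpr ⟨Finset.mem_range.mpr (by omega), ?_⟩
    calc ε < ((n : ℝ) + 1) * binomPMF n α (j + 1) := hmS.2
      _ ≤ ((n : ℝ) + 1) * binomPMF n α j := by
        gcongr
        exact binomPMF_succ_le (by omega) hα0.le hα1 (by linarith)
  have := hmin j hjS
  omega

open Finset in
/-- The CSM lower boundary `l_n = min{k : (n+1) b(n,α,k) > ε} − 1` satisfies `l_n < α n`,
provided the set `{k ∈ {0,…,n} : (n+1) b(n,α,k) > ε}` is nonempty. -/
theorem stmt4 (α ε : ℝ) (hα : α ∈ Set.Ioo (0:ℝ) 1) (hε : ε ∈ Set.Ioo (0:ℝ) 1) (n : ℕ)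
    (S : Finset ℕ)
    (hS : S = {k ∈ Finset.range (n + 1) | ε < ((n : ℝ) + 1) * binomPMF n α k})
    (hne : S.Nonempty) :
    ((S.min' hne : ℝ) - 1 : ℝ) < α * n :=
  stmt4_general α ε hα n S hS hne
end

section
/- Let X_1, X_2, ... be i.i.d. Bernoulli(p) random variables with p < α, S_n = Σ_{i≤n} X_i. Then almost surely there exists n such that (n+1) · C(n, S_n) α^{S_n} (1-α)^{n-S_n} ≤ ε, for any fixed ε ∈ (0,1) and α ∈ (0,1). -/
open MeasureTheory ProbabilityTheory

/-!
By the strong law of large numbers `S_n / n → p` almost surely, so `S_n ≤ c n` eventually for a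
fixed `c ∈ (p, α)`. For every `l ≥ 1` the Chernoff bound gives `b(n, α, k) ≤ ρ ^ n` whenever
`k ≤ c n`, with `ρ = l ^ c (1 - α + α / l)`; as a function of `l`, `ρ` equals `1` at `l = 1` with
derivative `c - α < 0`, so `ρ < 1` for some `l > 1`. Then
`(n + 1) b(n, α, S_n) ≤ (n + 1) ρ ^ n → 0`.
-/

open Filter Topology Finset

theorem HasDerivAt.exists_gt_lt_of_neg {f : ℝ → ℝ} {f' x : ℝ} (hf : HasDerivAt f f' x)
    (hf' : f' < 0) : ∃ y, x < y ∧ f y < f x := by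
  have hslope : ∀ᶠ y in 𝓝[>] x, slope f x y < 0 :=
    hf.hasDerivWithinAt.limsup_slope_le' (lt_irrefl x) hf'
  obtain ⟨y, hy, hxy⟩ := (hslope.and self_mem_nhdsWithin).exists
  exact ⟨y, hxy, (slope_neg_iff_of_le (le_of_lt hxy)).1 hy⟩

theorem exists_one_lt_rpow_mul_lt_one {c α : ℝ} (hcα : c < α) :
    ∃ l : ℝ, 1 < l ∧ l ^ c * (1 - α + α / l) < 1 := by
  have hderiv : HasDerivAt (fun l : ℝ => l ^ c * (1 - α + α / l)) (c - α) 1 := by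
    have hpow := Real.hasDerivAt_rpow_const (x := 1) (p := c) (Or.inl one_ne_zero)
    have hinv := ((hasDerivAt_inv one_ne_zero).const_mul α).const_add (1 - α)
    simpa only [div_eq_mul_inv] using (hpow.fun_mul hinv).congr_deriv (by norm_num; ring)
  simpa using hderiv.exists_gt_lt_of_neg (by linarith)

theorem choose_mul_pow_mul_pow_le_add_pow {R : Type*} [CommSemiring R] [PartialOrder R]
    [IsOrderedRing R] {a b : R} (ha : 0 ≤ a) (hb : 0 ≤ b) (n k : ℕ) :
    n.choose k * a ^ k * b ^ (n - k) ≤ (a + b) ^ n := by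
  rcases le_or_gt k n with hkn | hnk
  · rw [add_pow]
    calc (n.choose k : R) * a ^ k * b ^ (n - k) = a ^ k * b ^ (n - k) * n.choose k := by ring
      _ ≤ ∑ j ∈ range (n + 1), a ^ j * b ^ (n - j) * n.choose j :=
        single_le_sum (f := fun j => a ^ j * b ^ (n - j) * n.choose j) (fun j _ => by positivity)
          (mem_range.2 (Nat.lt_succ_of_le hkn))
  · simp [Nat.choose_eq_zero_of_lt hnk, add_nonneg ha hb]

theorem binomPMF_le_rpow_mul_pow {α c l : ℝ} (hα0 : 0 ≤ α) (hα1 : α ≤ 1) (hl : 1 ≤ l)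
    {n k : ℕ} (hk : (k : ℝ) ≤ c * n) :
    binomPMF n α k ≤ (l ^ c * (1 - α + α / l)) ^ n := by
  have hl0 : 0 < l := by linarith
  have hlk : l ^ k ≤ (l ^ c) ^ n := by
    rw [← Real.rpow_mul_natCast hl0.le, ← Real.rpow_natCast]
    exact Real.rpow_le_rpow_of_exponent_le hl hk
  calc binomPMF n α k = l ^ k * (n.choose k * (α / l) ^ k * (1 - α) ^ (n - k)) := by
        rw [binomPMF, div_pow]; field_simp
    _ ≤ (l ^ c) ^ n * (α / l + (1 - α)) ^ n := by
        gcongr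
        exact choose_mul_pow_mul_pow_le_add_pow (by positivity) (by linarith) n k
    _ = (l ^ c * (1 - α + α / l)) ^ n := by rw [← mul_pow, add_comm]

section ZeroOneValued

variable {Ω : Type*} [MeasurableSpace Ω] {X : Ω → ℕ}

omit [MeasurableSpace Ω] in
theorem natCast_eq_indicator_of_le_one (hX : ∀ ω, X ω ≤ 1) :
    (fun ω => (X ω : ℝ)) = {ω | X ω = 1}.indicator 1 := by
  funext ω
  rcases Nat.le_one_iff_eq_zero_or_eq_one.1 (hX ω) with h | h <;> simp [h]

theorem integral_natCast_of_le_one (μ : Measure Ω) (hXm : Measurable X) (hX : ∀ ω, X ω ≤ 1) :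
    ∫ ω, (X ω : ℝ) ∂μ = μ.real {ω | X ω = 1} := by
  rw [natCast_eq_indicator_of_le_one hX]
  exact integral_indicator_one (hXm (measurableSet_singleton 1))

theorem measure_preimage_singleton_of_le_one (μ : Measure Ω) [IsProbabilityMeasure μ]
    (hXm : Measurable X) (hX : ∀ ω, X ω ≤ 1) (k : ℕ) :
    μ (X ⁻¹' {k}) =
      if k = 0 then 1 - μ {ω | X ω = 1} else if k = 1 then μ {ω | X ω = 1} else 0 := by
  match k with
  | 0 =>
    have hzero : X ⁻¹' {0} = {ω | X ω = 1}ᶜ := by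
      ext ω; have := hX ω; simp; omega
    have hmeas : MeasurableSet {ω | X ω = 1} := hXm (measurableSet_singleton 1)
    rw [hzero, prob_compl_eq_one_sub hmeas]
    rfl
  | 1 => rfl
  | k + 2 =>
    have hempty : X ⁻¹' {k + 2} = ∅ := by
      ext ω; have := hX ω; simp; omega
    rw [hempty, measure_empty]
    rfl

theorem identDistrib_of_le_one {Ω' : Type*} [MeasurableSpace Ω'] {Y : Ω' → ℕ} {μ : Measure Ω}
    {ν : Measure Ω'} [IsProbabilityMeasure μ] [IsProbabilityMeasure ν] (hXm : Measurable X)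
    (hYm : Measurable Y) (hX : ∀ ω, X ω ≤ 1) (hY : ∀ ω, Y ω ≤ 1)
    (h : μ {ω | X ω = 1} = ν {ω | Y ω = 1}) : IdentDistrib X Y μ ν := by
  refine ⟨hXm.aemeasurable, hYm.aemeasurable, Measure.ext_of_singleton fun k => ?_⟩
  rw [Measure.map_apply hXm (measurableSet_singleton k),
    Measure.map_apply hYm (measurableSet_singleton k),
    measure_preimage_singleton_of_le_one μ hXm hX, measure_preimage_singleton_of_le_one ν hYm hY, h]

end ZeroOneValued

theorem ae_tendsto_average_of_iIndepFun_of_le_one {Ω : Type*} [MeasurableSpace Ω]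
    {μ : Measure Ω} [IsProbabilityMeasure μ] {p : ℝ} (hp : 0 ≤ p) {X : ℕ → Ω → ℕ}
    (hmeas : ∀ i, Measurable (X i)) (hindep : iIndepFun X μ) (hX : ∀ i ω, X i ω ≤ 1)
    (hdist : ∀ i, μ {ω | X i ω = 1} = ENNReal.ofReal p) :
    ∀ᵐ ω ∂μ, Tendsto (fun n : ℕ => (∑ i ∈ range n, (X i ω : ℝ)) / n) atTop (𝓝 p) := by
  have hint : Integrable (fun ω => (X 0 ω : ℝ)) μ := by
    rw [natCast_eq_indicator_of_le_one (hX 0)]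
    exact (integrable_const 1).indicator (hmeas 0 (measurableSet_singleton 1))
  have hindep' : Pairwise (fun i j => IndepFun (fun ω => (X i ω : ℝ)) (fun ω => (X j ω : ℝ)) μ) :=
    fun i j hij => (hindep.indepFun hij).comp measurable_from_top measurable_from_top
  have hident : ∀ i, IdentDistrib (fun ω => (X i ω : ℝ)) (fun ω => (X 0 ω : ℝ)) μ μ := fun i =>
    (identDistrib_of_le_one (hmeas i) (hmeas 0) (hX i) (hX 0) (by rw [hdist, hdist])).comp
      measurable_from_top
  have hmean : ∫ ω, (X 0 ω : ℝ) ∂μ = p := by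
    rw [integral_natCast_of_le_one μ (hmeas 0) (hX 0), measureReal_def, hdist,
      ENNReal.toReal_ofReal hp]
  simpa [hmean] using strong_law_ae_real (fun i ω => (X i ω : ℝ)) hint hindep' hident

/-- If `p < α`, then almost surely some `n` satisfies `(n+1) b(n,α,S_n) ≤ ε`, i.e. the
CSM stopping time is finite almost surely. -/
theorem stmt8
    (Ω : Type*) [MeasureSpace Ω] [IsProbabilityMeasure (ℙ : Measure Ω)]
    (p α ε : ℝ) (hp : p ∈ Set.Ioo (0:ℝ) 1) (hα : α ∈ Set.Ioo (0:ℝ) 1)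
    (hpα : p < α) (hε : ε ∈ Set.Ioo (0:ℝ) 1)
    (X : ℕ → Ω → ℕ)
    (hmeas : ∀ i, Measurable (X i))
    (hindep : iIndepFun X ℙ)
    (hval : ∀ i ω, X i ω ≤ 1)
    (hdist : ∀ i, ℙ {ω | X i ω = 1} = ENNReal.ofReal p) :
    ℙ {ω | ∃ n : ℕ, 1 ≤ n ∧
        ((n : ℝ) + 1) * binomPMF n α (∑ i ∈ Finset.range n, X i ω) ≤ ε} = 1 := by
  obtain ⟨c, hpc, hcα⟩ := exists_between hpα
  obtain ⟨l, hl, hρ⟩ := exists_one_lt_rpow_mul_lt_one hcα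
  set ρ := l ^ c * (1 - α + α / l)
  have hρ0 : 0 ≤ ρ := by
    have : 0 ≤ α / l := div_nonneg hα.1.le (by linarith)
    exact mul_nonneg (Real.rpow_nonneg (by linarith) c) (by linarith [hα.2])
  have hsmall : ∀ᶠ n : ℕ in atTop, ((n : ℝ) + 1) * ρ ^ n ≤ ε := by
    have hlim : Tendsto (fun n : ℕ => ((n : ℝ) + 1) * ρ ^ n) atTop (𝓝 0) := by
      simpa [add_mul] using (tendsto_self_mul_const_pow_of_lt_one hρ0 hρ).add
        (tendsto_pow_atTop_nhds_zero_of_lt_one hρ0 hρ)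
    exact hlim.eventually (eventually_le_nhds hε.1)
  have hslln := ae_tendsto_average_of_iIndepFun_of_le_one hp.1.le hmeas hindep hval hdist
  refine (measure_congr (ae_eq_univ.2 (ae_iff.1 ?_))).trans measure_univ
  filter_upwards [hslln] with ω hω
  obtain ⟨n, hn, havg, hnε⟩ := ((eventually_ge_atTop 1).and
    ((hω.eventually (eventually_lt_nhds hpc)).and hsmall)).exists
  have hsum : ((∑ i ∈ range n, X i ω : ℕ) : ℝ) ≤ c * n := by
    push_cast
    exact ((div_lt_iff₀ (by exact_mod_cast hn)).1 havg).le
  refine ⟨n, hn, le_trans ?_ hnε⟩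
  gcongr
  exact binomPMF_le_rpow_mul_pow hα.1.le hα.2.le hl.le hsum
end

section
/- Monotonicity of hitting probabilities: let (l_n) and (u_n) be fixed integer sequences and for p ∈ [0,1] let S_n be a sum of n i.i.d. Bernoulli(p) variables with stopping time τ = inf{n : S_n ≥ u_n or S_n ≤ l_n}. Then the probability ℙ_p(τ < ∞, S_τ ≥ u_τ) of hitting the upper boundary first is non-decreasing in p. -/
open MeasureTheory ProbabilityTheory

/-!
Realize both walks on one probability space through common uniforms `U_i` on `[0, 1]`, with
increments `1{U_i ≤ p}` and `1{U_i ≤ p'}`; then the `p`-walk lies below the `p'`-walk pathwise.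
Hitting the upper boundary first is monotone in the path: if `S ≤ S'` and `S` exits through the
top at time `τ`, then `S'` exits no later than `τ`, and not through the bottom, since `S` would
have exited there too. As the event only depends on the law of the increments, which is the
product of Bernoulli measures, the probabilities compare.
-/

/-- The event of hitting the upper boundary first: the stopping time
`τ = inf{n : S n ≥ u n or S n ≤ l n}` is finite and `S τ ≥ u τ`. -/
def hitsUpperFirst (l u : ℕ → ℤ) (S : ℕ → ℤ) : Prop :=
  (∃ n, u n ≤ S n ∨ S n ≤ l n) ∧
    u (sInf {n | u n ≤ S n ∨ S n ≤ l n}) ≤ S (sInf {n | u n ≤ S n ∨ S n ≤ l n})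

open scoped unitInterval

theorem hitsUpperFirst_iff (l u S : ℕ → ℤ) :
    hitsUpperFirst l u S ↔ ∃ n, (∀ m < n, l m < S m ∧ S m < u m) ∧ u n ≤ S n := by
  constructor
  · rintro ⟨-, hup⟩
    refine ⟨_, fun m hm => ?_, hup⟩
    have := Nat.notMem_of_lt_sInf hm
    simp only [Set.mem_ofPred_eq, not_or, not_le] at this
    exact ⟨this.2, this.1⟩
  · rintro ⟨n, hbefore, hn⟩
    have hmem : n ∈ {n | u n ≤ S n ∨ S n ≤ l n} := Or.inl hn
    have hτ : sInf {n | u n ≤ S n ∨ S n ≤ l n} = n := by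
      refine le_antisymm (Nat.sInf_le hmem) (not_lt.mp fun hlt => ?_)
      obtain ⟨hl, hu⟩ := hbefore _ hlt
      rcases Nat.sInf_mem ⟨n, hmem⟩ with h | h <;> omega
    exact ⟨⟨n, hmem⟩, hτ ▸ hn⟩

theorem hitsUpperFirst.mono {l u S S' : ℕ → ℤ} (hS : S ≤ S') (h : hitsUpperFirst l u S) :
    hitsUpperFirst l u S' := by
  obtain ⟨⟨n, hn⟩, hup⟩ := h
  set τ := sInf {n | u n ≤ S n ∨ S n ≤ l n}
  have hτ : τ ∈ {n | u n ≤ S' n ∨ S' n ≤ l n} := Or.inl (hup.trans (hS τ))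
  refine ⟨⟨τ, hτ⟩, ?_⟩
  set τ' := sInf {n | u n ≤ S' n ∨ S' n ≤ l n}
  have hτ'τ : τ' ≤ τ := Nat.sInf_le hτ
  rcases Nat.sInf_mem ⟨τ, hτ⟩ with h | h
  · exact h
  · -- `S'` exits below at `τ'`, hence so does `S`, forcing `τ ≤ τ'`
    have hττ' : τ ≤ τ' := Nat.sInf_le (Or.inr ((hS τ').trans h))
    rw [le_antisymm hτ'τ hττ']
    exact hup.trans (hS τ)

def partialSums (x : ℕ → ℕ) (n : ℕ) : ℤ := ((∑ i ∈ Finset.range n, x i : ℕ) : ℤ)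

def upperHitSet (l u : ℕ → ℤ) : Set (ℕ → ℕ) := {x | hitsUpperFirst l u (partialSums x)}

theorem partialSums_mono : Monotone partialSums := fun _ _ hxy _ =>
  Nat.cast_le.mpr (Finset.sum_le_sum fun i _ => hxy i)

theorem isUpperSet_upperHitSet (l u : ℕ → ℤ) : IsUpperSet (upperHitSet l u) :=
  fun _ _ hxy hx => hitsUpperFirst.mono (partialSums_mono hxy) hx

theorem measurable_partialSums_apply (n : ℕ) : Measurable fun x : ℕ → ℕ => partialSums x n := by
  unfold partialSums
  fun_prop

theorem measurableSet_upperHitSet (l u : ℕ → ℤ) : MeasurableSet (upperHitSet l u) := by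
  have h : upperHitSet l u = ⋃ n, (⋂ m < n, {x | l m < partialSums x m ∧ partialSums x m < u m})
      ∩ {x | u n ≤ partialSums x n} := by
    ext x
    simp [upperHitSet, hitsUpperFirst_iff]
  rw [h]
  exact .iUnion fun n => .inter (.iInter fun m => .iInter fun _ =>
    measurable_partialSums_apply m (.of_discrete (s := {z | l m < z ∧ z < u m})))
    (measurable_partialSums_apply n (.of_discrete (s := {z | u n ≤ z})))

theorem map_eq_bernoulliMeasure {Ω : Type*} [MeasurableSpace Ω] (μ : Measure Ω)
    [IsProbabilityMeasure μ] {Z : Ω → ℕ} (hZ : Measurable Z) (hZ1 : ∀ ω, Z ω ≤ 1) (p : I)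
    (hp : μ {ω | Z ω = 1} = ENNReal.ofReal p) : μ.map Z = Ber(1, 0, p) := by
  classical
  ext s hs
  have hZ01 (ω : Ω) : Z ω = 0 ∨ Z ω = 1 := by have := hZ1 ω; omega
  rw [Measure.map_apply hZ hs, bernoulliMeasure_apply p hs]
  have hcoe (q : I) : ((unitInterval.toNNReal q : NNReal) : ENNReal) = ENNReal.ofReal q :=
    (ENNReal.ofReal_eq_coe_nnreal q.2.1).symm
  have hmeas : MeasurableSet {ω | Z ω = 1} := hZ (.singleton 1)
  split_ifs with h1 h0 h0
  · convert measure_univ (μ := μ)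
    ext ω; rcases hZ01 ω with h | h <;> simp [h, h0, h1]
  · rw [hcoe, ← hp]
    congr 1
    ext ω; rcases hZ01 ω with h | h <;> simp [h, h0, h1]
  · have : Z ⁻¹' s = {ω | Z ω = 1}ᶜ := by
      ext ω; rcases hZ01 ω with h | h <;> simp [h, h0, h1]
    rw [this, measure_compl hmeas (measure_ne_top _ _), hp, measure_univ, hcoe, unitInterval.coe_symm_eq, ENNReal.ofReal_sub _ p.2.1, ENNReal.ofReal_one]
  · convert measure_empty (μ := μ)
    ext ω; rcases hZ01 ω with h | h <;> simp [h, h0, h1]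

theorem map_eq_infinitePi_bernoulliMeasure {Ω ι : Type*} [MeasurableSpace Ω] (μ : Measure Ω)
    [IsProbabilityMeasure μ] {Z : ι → Ω → ℕ} (hZ : ∀ i, Measurable (Z i))
    (hind : iIndepFun Z μ) (hZ1 : ∀ i ω, Z i ω ≤ 1) (p : I)
    (hp : ∀ i, μ {ω | Z i ω = 1} = ENNReal.ofReal p) :
    μ.map (fun ω i => Z i ω) = Measure.infinitePi fun _ => Ber(1, 0, p) := by
  rw [hind.map_fun_eq_infinitePi_map hZ]
  simp_rw [map_eq_bernoulliMeasure μ (hZ _) (hZ1 _) p (hp _)]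

noncomputable def threshold (p t : I) : ℕ := if t ≤ p then 1 else 0

@[fun_prop]
theorem measurable_threshold (p : I) : Measurable (threshold p) :=
  Measurable.ite measurableSet_Iic measurable_const measurable_const

theorem threshold_mono_left (t : I) : Monotone fun p => threshold p t := by
  intro p q hpq
  simp only [threshold]
  split_ifs with hp hq <;> first | omega | exact absurd (hp.trans hpq) hq

theorem map_threshold (p : I) : (volume : Measure I).map (threshold p) = Ber(1, 0, p) :=
  map_eq_bernoulliMeasure _ (measurable_threshold p)
    (fun t => by unfold threshold; split_ifs <;> omega) p
    (by
      have : {t | threshold p t = 1} = Set.Iic p := by ext t; simp [threshold]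
      rw [this, unitInterval.volume_Iic])

theorem infinitePi_bernoulliMeasure_mono {ι : Type*} {A : Set (ι → ℕ)} (hA : MeasurableSet A)
    (hA' : IsUpperSet A) {p q : I} (hpq : p ≤ q) :
    Measure.infinitePi (fun _ : ι => Ber(1, 0, p)) A
      ≤ Measure.infinitePi (fun _ : ι => Ber(1, 0, q)) A := by
  simp_rw [← map_threshold]
  rw [← Measure.infinitePi_map_pi _ fun _ => measurable_threshold p,
    ← Measure.infinitePi_map_pi _ fun _ => measurable_threshold q,
    Measure.map_apply (by fun_prop) hA, Measure.map_apply (by fun_prop) hA]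
  exact measure_mono fun t ht => hA' (fun i => threshold_mono_left (t i) hpq) ht

theorem measure_preimage_upperHitSet {Ω : Type*} [MeasurableSpace Ω] (μ : Measure Ω)
    [IsProbabilityMeasure μ] {Z : ℕ → Ω → ℕ} (hZ : ∀ i, Measurable (Z i))
    (hind : iIndepFun Z μ) (hZ1 : ∀ i ω, Z i ω ≤ 1) (p : I)
    (hp : ∀ i, μ {ω | Z i ω = 1} = ENNReal.ofReal p) (l u : ℕ → ℤ) :
    μ ((fun ω i => Z i ω) ⁻¹' upperHitSet l u)
      = Measure.infinitePi (fun _ => Ber(1, 0, p)) (upperHitSet l u) := by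
  rw [← map_eq_infinitePi_bernoulliMeasure μ hZ hind hZ1 p hp,
    Measure.map_apply (measurable_pi_lambda _ hZ) (measurableSet_upperHitSet l u)]

/-- Monotonicity of hitting probabilities (Gandy 2009, Lemma 3): for fixed integer boundary
sequences `l, u`, the probability that a Bernoulli random walk with success probability `p`
hits the upper boundary first is non-decreasing in `p`. -/
theorem stmt11
    (l u : ℕ → ℤ)
    (Ω : Type*) [MeasureSpace Ω] [IsProbabilityMeasure (ℙ : Measure Ω)]
    (Ω' : Type*) [MeasureSpace Ω'] [IsProbabilityMeasure (ℙ : Measure Ω')]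
    (p p' : ℝ) (hp : p ∈ Set.Icc (0:ℝ) 1) (hp' : p' ∈ Set.Icc (0:ℝ) 1) (hpp' : p ≤ p')
    (X : ℕ → Ω → ℕ) (Y : ℕ → Ω' → ℕ)
    (hmX : ∀ i, Measurable (X i)) (hmY : ∀ i, Measurable (Y i))
    (hiX : iIndepFun X ℙ)
    (hiY : iIndepFun Y ℙ)
    (hvX : ∀ i ω, X i ω ≤ 1) (hvY : ∀ i ω, Y i ω ≤ 1)
    (hdX : ∀ i, ℙ {ω | X i ω = 1} = ENNReal.ofReal p)
    (hdY : ∀ i, ℙ {ω | Y i ω = 1} = ENNReal.ofReal p') :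
    ℙ {ω | hitsUpperFirst l u (fun n => ((∑ i ∈ Finset.range n, X i ω : ℕ) : ℤ))}
      ≤ ℙ {ω | hitsUpperFirst l u (fun n => ((∑ i ∈ Finset.range n, Y i ω : ℕ) : ℤ))} := by
  calc ℙ {ω | hitsUpperFirst l u (fun n => ((∑ i ∈ Finset.range n, X i ω : ℕ) : ℤ))}
      = Measure.infinitePi (fun _ => Ber(1, 0, ⟨p, hp⟩)) (upperHitSet l u) :=
        measure_preimage_upperHitSet ℙ hmX hiX hvX ⟨p, hp⟩ hdX l u
    _ ≤ Measure.infinitePi (fun _ => Ber(1, 0, ⟨p', hp'⟩)) (upperHitSet l u) :=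
        infinitePi_bernoulliMeasure_mono (measurableSet_upperHitSet l u)
          (isUpperSet_upperHitSet l u) hpp'
    _ = ℙ {ω | hitsUpperFirst l u (fun n => ((∑ i ∈ Finset.range n, Y i ω : ℕ) : ℤ))} :=
        (measure_preimage_upperHitSet ℙ hmY hiY hvY ⟨p', hp'⟩ hdY l u).symm
end

section
/- Any truncated Monte Carlo decision procedure, i.e., a measurable decision function d : {0,1}^N → {reject, accept} based on at most N i.i.d. Bernoulli(p) samples, has resampling risk at least 1/2 in the limit p → α from one side: sup_{p} RR_p(d) ≥ 1/2, where RR_p(d) = ℙ_p(d = reject) if p > α and ℙ_p(d = accept) if p ≤ α. -/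
open Classical in
/-- `ℙ_p(d = reject)` for a decision rule `d` based on `N` i.i.d. Bernoulli(p) samples
(`true` = reject): the sum over all sample paths of their probability times the decision. -/
noncomputable def rejectProb (N : ℕ) (d : (Fin N → Bool) → Bool) (p : ℝ) : ℝ :=
  ∑ x : Fin N → Bool, (∏ i, if x i then p else 1 - p) * (if d x then 1 else 0)

open Classical in
/-- Resampling risk of the truncated procedure `d` at threshold `α`:
`ℙ_p(reject)` if `p > α` and `ℙ_p(accept)` if `p ≤ α`. -/
noncomputable def truncatedRR (N : ℕ) (d : (Fin N → Bool) → Bool) (α p : ℝ) : ℝ :=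
  if α < p then rejectProb N d p else 1 - rejectProb N d p

open Classical in
lemma rp_cont (N : ℕ) (d : (Fin N → Bool) → Bool) : Continuous (rejectProb N d) := by
  unfold rejectProb
  apply continuous_finset_sum
  intro x _
  apply Continuous.mul
  · apply continuous_finset_prod
    intro i _
    by_cases h : x i <;> simp [h] <;> continuity
  · exact continuous_const

open Classical in
lemma rp_mem (N : ℕ) (d : (Fin N → Bool) → Bool) {p : ℝ} (hp : p ∈ Set.Icc (0:ℝ) 1) :
    rejectProb N d p ∈ Set.Icc (0:ℝ) ((2:ℝ)^N) := by
  have h0 : ∀ x : Fin N → Bool, (0:ℝ) ≤ ∏ i, if x i then p else 1 - p := fun x =>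
    Finset.prod_nonneg fun i _ => by split <;> linarith [hp.1, hp.2]
  constructor
  · apply Finset.sum_nonneg
    intro x _
    apply mul_nonneg (h0 x)
    split <;> norm_num
  · calc (∑ x : Fin N → Bool, (∏ i, if x i then p else 1 - p) * (if d x then 1 else 0))
        ≤ ∑ _x : Fin N → Bool, (1:ℝ) := by
          apply Finset.sum_le_sum
          intro x _
          have h1 : (∏ i, if x i then p else 1 - p) ≤ 1 :=
            Finset.prod_le_one (fun i _ => by split <;> linarith [hp.1, hp.2])
              (fun i _ => by split <;> linarith [hp.1, hp.2])
          have h2 : (if d x then (1:ℝ) else 0) ≤ 1 := by split <;> norm_num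
          have h2' : (0:ℝ) ≤ (if d x then (1:ℝ) else 0) := by split <;> norm_num
          nlinarith [h0 x]
    _ = 2^N := by simp [Finset.card_univ]


/-- No truncated Monte Carlo decision procedure can uniformly bound the resampling risk
below `1/2`: for any `N` and any decision rule `d` based on `N` Bernoulli samples,
`sup_{p ∈ [0,1]} RR_p(d) ≥ 1/2`. -/
theorem stmt16 (N : ℕ) (d : (Fin N → Bool) → Bool) (α : ℝ) (hα : α ∈ Set.Ioo (0:ℝ) 1) :
    (1 / 2 : ℝ) ≤ sSup (truncatedRR N d α '' Set.Icc (0:ℝ) 1) := by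
  obtain ⟨hα0, hα1⟩ := hα
  have hone : (1:ℝ) ≤ 2^N := by
    calc (1:ℝ) = 1^N := (one_pow N).symm
    _ ≤ 2^N := pow_le_pow_left₀ (by norm_num) (by norm_num) N
  have hbdd : BddAbove (truncatedRR N d α '' Set.Icc (0:ℝ) 1) := by
    refine ⟨2^N, ?_⟩
    rintro _ ⟨p, hp, rfl⟩
    have hm := rp_mem N d hp
    unfold truncatedRR
    split
    · exact hm.2
    · linarith [hm.1]
  set S := sSup (truncatedRR N d α '' Set.Icc (0:ℝ) 1) with hS
  by_cases h : rejectProb N d α ≤ 1/2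
  · have hmem : truncatedRR N d α α ∈ truncatedRR N d α '' Set.Icc (0:ℝ) 1 :=
      ⟨α, ⟨le_of_lt hα0, le_of_lt hα1⟩, rfl⟩
    have := le_csSup hbdd hmem
    have heq : truncatedRR N d α α = 1 - rejectProb N d α := by
      simp [truncatedRR]
    linarith [heq ▸ this]
  · push_neg at h
    have hev : ∀ᶠ p in nhdsWithin α (Set.Ioi α), rejectProb N d p ≤ S := by
      have h1 : ∀ᶠ p in nhdsWithin α (Set.Ioi α), p < 1 :=
        ((isOpen_Iio.eventually_mem hα1).filter_mono nhdsWithin_le_nhds)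
      filter_upwards [h1, self_mem_nhdsWithin] with p hp1 hp2
      have hmem : truncatedRR N d α p ∈ truncatedRR N d α '' Set.Icc (0:ℝ) 1 :=
        ⟨p, ⟨le_of_lt (lt_trans hα0 hp2), le_of_lt hp1⟩, rfl⟩
      have hle := le_csSup hbdd hmem
      have heq : truncatedRR N d α p = rejectProb N d p := by
        simp [truncatedRR, Set.mem_Ioi.mp hp2]
      rw [heq] at hle
      exact hle
    have ht : Filter.Tendsto (rejectProb N d) (nhdsWithin α (Set.Ioi α))
        (nhds (rejectProb N d α)) :=
      ((rp_cont N d).tendsto α).mono_left nhdsWithin_le_nhds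
    have := le_of_tendsto ht hev
    linarith
end

section
/- Let ε ∈ (0,1), α ∈ (0,1), and let τ be the CSM stopping time τ = inf{n : (n+1)·b(n,α,S_n) ≤ ε} with S_n a sum of i.i.d. Bernoulli(α) variables. Then ℙ_α(τ < ∞) ≤ ε. -/
open MeasureTheory ProbabilityTheory

/-!
Under the uniform mixture over `p ∈ [0,1]` of the Bernoulli(`p`) laws, a fixed binary string of
length `n` with `w` ones has probability `∫₀¹ p^w (1-p)^(n-w) dp = 1/((n+1) C(n,w))`; this is
`laplaceWeight n w`. So `(n+1) b(n,α,w) ≤ ε` says that the `ℙ_α`-probability of the observed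
string is at most `ε` times its mixture probability. The strings at which the rule stops for the
first time form a prefix-free set, and the mixture weights are consistent (a string's weight is
the sum of the weights of its two one-letter extensions), so the total mixture weight of these
strings is at most `1`. Summing over them gives `ℙ_α(τ < ∞) ≤ ε`.
-/

open Finset
open scoped ENNReal

section Stopping

open scoped Classical

variable {β : Type*} [Fintype β] (rule : ∀ n, (Fin n → β) → Prop)

noncomputable def aliveStrings (n : ℕ) : Finset (Fin n → β) :=
  {v | ∀ m (h : m < n), ¬ rule m (Fin.take m h.le v)}

noncomputable def firstHitStrings (n : ℕ) : Finset (Fin n → β) :=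
  {v ∈ aliveStrings rule n | rule n v}

theorem mem_aliveStrings_succ {n : ℕ} (v : Fin (n + 1) → β) :
    v ∈ aliveStrings rule (n + 1) ↔
      Fin.init v ∈ aliveStrings rule n ∧ ¬ rule n (Fin.init v) := by
  simp only [aliveStrings, mem_filter, mem_univ, true_and, Fin.take_init]
  refine ⟨fun h => ⟨fun m hm => h m (by omega),
    by simpa [Fin.take_eq_init] using h n (by omega)⟩, fun ⟨h, hn⟩ m hm => ?_⟩
  rcases Nat.lt_succ_iff_lt_or_eq.1 hm with hm | rfl
  · exact h m hm
  · simpa [Fin.take_eq_init] using hn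

theorem sum_aliveStrings_succ_add_sum_firstHitStrings {M : Type*} [AddCommMonoid M]
    (Q : ∀ n, (Fin n → β) → M) (hQ : ∀ n u, ∑ b, Q (n + 1) (Fin.snoc u b) = Q n u)
    (n : ℕ) :
    ∑ v ∈ aliveStrings rule (n + 1), Q (n + 1) v + ∑ v ∈ firstHitStrings rule n, Q n v =
      ∑ v ∈ aliveStrings rule n, Q n v := by
  have hsplit : ∑ v ∈ aliveStrings rule (n + 1), Q (n + 1) v =
      ∑ u ∈ aliveStrings rule n with ¬ rule n u, Q n u := by
    rw [← sum_congr rfl fun u _ => hQ n u, ← sum_product_right']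
    refine sum_equiv (Fin.snocEquiv fun _ => β).symm (fun v => ?_) (fun v _ => ?_)
    · simp [mem_aliveStrings_succ, Fin.snocEquiv]
    · simp [Fin.snocEquiv]
  rw [hsplit, firstHitStrings, add_comm, sum_filter_add_sum_filter_not]

theorem sum_range_sum_firstHitStrings_add_sum_aliveStrings {M : Type*} [AddCommMonoid M]
    (Q : ∀ n, (Fin n → β) → M) (hQ : ∀ n u, ∑ b, Q (n + 1) (Fin.snoc u b) = Q n u)
    (N : ℕ) :
    ∑ n ∈ range N, ∑ v ∈ firstHitStrings rule n, Q n v +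
      ∑ v ∈ aliveStrings rule N, Q N v = Q 0 Fin.elim0 := by
  induction N with
  | zero => simp [aliveStrings, Subsingleton.elim _ (Fin.elim0 : Fin 0 → β)]
  | succ N ih =>
    rw [sum_range_succ, add_assoc, add_comm (∑ v ∈ _, Q N v),
      sum_aliveStrings_succ_add_sum_firstHitStrings rule Q hQ, ih]

theorem tsum_sum_firstHitStrings_le (Q : ∀ n, (Fin n → β) → ℝ≥0∞)
    (hQ : ∀ n u, ∑ b, Q (n + 1) (Fin.snoc u b) = Q n u) :
    ∑' n, ∑ v ∈ firstHitStrings rule n, Q n v ≤ Q 0 Fin.elim0 :=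
  ENNReal.tsum_le_of_sum_range_le fun N =>
    (sum_range_sum_firstHitStrings_add_sum_aliveStrings rule Q hQ N).le.trans' le_self_add

theorem exists_mem_firstHitStrings (x : ℕ → β) (h : ∃ n, rule n fun i : Fin n => x i) :
    ∃ n, (fun i : Fin n => x i) ∈ firstHitStrings rule n := by
  refine ⟨Nat.find h, ?_⟩
  simp only [firstHitStrings, aliveStrings, mem_filter, mem_univ, true_and]
  exact ⟨fun m hm => Nat.find_min h hm, Nat.find_spec h⟩

theorem measure_biUnion_firstHitStrings_le {Ω : Type*} [MeasurableSpace Ω] (μ : Measure Ω)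
    (A : ∀ n, (Fin n → β) → Set Ω) (Q : ∀ n, (Fin n → β) → ℝ≥0∞)
    (hQ : ∀ n u, ∑ b, Q (n + 1) (Fin.snoc u b) = Q n u) (c : ℝ≥0∞)
    (hA : ∀ n, ∀ v ∈ firstHitStrings rule n, μ (A n v) ≤ c * Q n v) :
    μ (⋃ n, ⋃ v ∈ firstHitStrings rule n, A n v) ≤ c * Q 0 Fin.elim0 :=
  calc μ (⋃ n, ⋃ v ∈ firstHitStrings rule n, A n v)
      ≤ ∑' n, ∑ v ∈ firstHitStrings rule n, μ (A n v) :=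
        (measure_iUnion_le _).trans (ENNReal.tsum_le_tsum fun n => measure_biUnion_finset_le _ _)
    _ ≤ ∑' n, c * ∑ v ∈ firstHitStrings rule n, Q n v := by
        gcongr with n
        rw [mul_sum]
        exact sum_le_sum (hA n)
    _ ≤ c * Q 0 Fin.elim0 := by
        rw [ENNReal.tsum_mul_left]
        gcongr
        exact tsum_sum_firstHitStrings_le rule Q hQ

end Stopping

noncomputable def laplaceWeight (n w : ℕ) : ℝ := (((n : ℝ) + 1) * n.choose w)⁻¹

theorem laplaceWeight_nonneg (n w : ℕ) : 0 ≤ laplaceWeight n w := by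
  unfold laplaceWeight; positivity

theorem laplaceWeight_add_laplaceWeight_succ {n w : ℕ} (hw : w ≤ n) :
    laplaceWeight (n + 1) w + laplaceWeight (n + 1) (w + 1) = laplaceWeight n w := by
  have hc : (0 : ℝ) < n.choose w := by exact_mod_cast Nat.choose_pos hw
  have hc₁ : (0 : ℝ) < (n + 1).choose w := by
    exact_mod_cast Nat.choose_pos (Nat.le_succ_of_le hw)
  have hc₂ : (0 : ℝ) < (n + 1).choose (w + 1) := by exact_mod_cast Nat.choose_pos (by omega)
  have h₁ : ((n + 1).choose w : ℝ) * (n + 1 - w) = n.choose w * (n + 1) := by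
    have := congrArg (Nat.cast (R := ℝ)) (Nat.choose_mul_succ_eq n w)
    push_cast [Nat.cast_sub (Nat.le_succ_of_le hw)] at this
    linarith
  have h₂ : ((n + 1).choose (w + 1) : ℝ) * (w + 1) = n.choose w * (n + 1) := by
    exact_mod_cast (Nat.add_one_mul_choose_eq n w).symm.trans (mul_comm _ _)
  unfold laplaceWeight
  push_cast
  field_simp
  linear_combination (-((n + 1).choose (w + 1) : ℝ)) * h₁ - ((n + 1).choose w : ℝ) * h₂

theorem succ_mul_binomPMF_mul_laplaceWeight (p : ℝ) {n w : ℕ} (hw : w ≤ n) :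
    ((n : ℝ) + 1) * binomPMF n p w * laplaceWeight n w = p ^ w * (1 - p) ^ (n - w) := by
  have hc : (0 : ℝ) < n.choose w := by exact_mod_cast Nat.choose_pos hw
  unfold binomPMF laplaceWeight
  field_simp

section BoolStrings

variable {n : ℕ}

def numTrue (v : Fin n → Bool) : ℕ := #{i | v i = true}

theorem numTrue_le (v : Fin n → Bool) : numTrue v ≤ n :=
  (card_filter_le _ _).trans_eq (card_fin n)

theorem numTrue_snoc (u : Fin n → Bool) (b : Bool) :
    numTrue (Fin.snoc u b : Fin (n + 1) → Bool) = numTrue u + b.toNat := by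
  simp only [numTrue, card_filter, Fin.sum_univ_castSucc, Fin.snoc_castSucc, Fin.snoc_last]
  cases b <;> rfl

theorem prod_ite_eq_pow_numTrue {M : Type*} [CommMonoid M] (a b : M) (v : Fin n → Bool) :
    ∏ i, (if v i then a else b) = a ^ numTrue v * b ^ (n - numTrue v) := by
  have hcard := card_filter_add_card_filter_not (s := univ) (fun i => v i = true)
  rw [card_univ, Fintype.card_fin] at hcard
  rw [prod_ite, prod_const, prod_const, numTrue, ← Nat.sub_eq_of_eq_add' hcard.symm]

theorem sum_range_eq_numTrue (x : ℕ → ℕ) (hx : ∀ i, x i ≤ 1) (n : ℕ) :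
    ∑ i ∈ range n, x i = numTrue fun i : Fin n => decide (x i = 1) := by
  rw [numTrue, card_filter, ← Fin.sum_univ_eq_sum_range]
  refine sum_congr rfl fun i _ => ?_
  rcases Nat.le_one_iff_eq_zero_or_eq_one.1 (hx i) with h | h <;> simp [h]

theorem sum_ofReal_laplaceWeight_snoc (u : Fin n → Bool) :
    ∑ b, ENNReal.ofReal (laplaceWeight (n + 1) (numTrue (Fin.snoc u b : Fin (n + 1) → Bool))) =
      ENNReal.ofReal (laplaceWeight n (numTrue u)) := by
  rw [Fintype.sum_bool, numTrue_snoc, numTrue_snoc, Bool.toNat_true, Bool.toNat_false, add_zero,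
    ← ENNReal.ofReal_add (laplaceWeight_nonneg _ _) (laplaceWeight_nonneg _ _), add_comm,
    laplaceWeight_add_laplaceWeight_succ (numTrue_le u)]

theorem measure_forall_fin_eq_of_iIndepFun {Ω : Type*} [MeasurableSpace Ω] {μ : Measure Ω}
    [IsProbabilityMeasure μ] {Y : ℕ → Ω → Bool} (hY : ∀ i, Measurable (Y i))
    (hind : iIndepFun Y μ) {p : ℝ} (hp₀ : 0 ≤ p) (hp₁ : p ≤ 1)
    (hdist : ∀ i, μ {ω | Y i ω = true} = ENNReal.ofReal p) (v : Fin n → Bool) :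
    μ {ω | ∀ i : Fin n, Y i ω = v i} =
      ENNReal.ofReal (p ^ numTrue v * (1 - p) ^ (n - numTrue v)) := by
  have hatom : ∀ i : Fin n,
      μ (Y i ⁻¹' {v i}) = ENNReal.ofReal (if v i then p else 1 - p) := by
    intro i
    have hfalse : Y i ⁻¹' {false} = {ω | Y i ω = true}ᶜ := by ext; simp
    cases v i
    · rw [hfalse, prob_compl_eq_one_sub (measurableSet_eq_fun (hY i) measurable_const), hdist,
        ← ENNReal.ofReal_one, ← ENNReal.ofReal_sub _ hp₀]
      rfl
    · exact hdist i
  have hcyl : {ω | ∀ i : Fin n, Y i ω = v i} = ⋂ i : Fin n, Y i ⁻¹' {v i} := by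
    ext; simp
  rw [hcyl, (hind.precomp Fin.val_injective).meas_iInter fun i => ⟨{v i}, trivial, rfl⟩]
  rw [Fintype.prod_congr _ _ hatom, ← ENNReal.ofReal_prod_of_nonneg fun i _ => by
    split <;> linarith, prod_ite_eq_pow_numTrue]

end BoolStrings

/-- At the threshold `p = α`, the CSM stopping time
`τ = inf{n : (n+1) b(n,α,S_n) ≤ ε}` satisfies `ℙ_α(τ < ∞) ≤ ε`. -/
theorem stmt18
    (Ω : Type*) [MeasureSpace Ω] [IsProbabilityMeasure (ℙ : Measure Ω)]
    (α ε : ℝ) (hα : α ∈ Set.Ioo (0:ℝ) 1) (hε : ε ∈ Set.Ioo (0:ℝ) 1)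
    (X : ℕ → Ω → ℕ)
    (hmeas : ∀ i, Measurable (X i))
    (hindep : iIndepFun X ℙ)
    (hval : ∀ i ω, X i ω ≤ 1)
    (hdist : ∀ i, ℙ {ω | X i ω = 1} = ENNReal.ofReal α) :
    ℙ {ω | ∃ n : ℕ, 1 ≤ n ∧
        ((n : ℝ) + 1) * binomPMF n α (∑ i ∈ Finset.range n, X i ω) ≤ ε}
      ≤ ENNReal.ofReal ε := by
  let Y : ℕ → Ω → Bool := fun i => (fun k => decide (k = 1)) ∘ X i
  have hYmeas : ∀ i, Measurable (Y i) := fun i => measurable_from_nat.comp (hmeas i)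
  have hYindep : iIndepFun Y ℙ := hindep.comp _ fun _ => measurable_from_nat
  have hYdist : ∀ i, ℙ {ω | Y i ω = true} = ENNReal.ofReal α := by simpa [Y] using hdist
  let rule n (v : Fin n → Bool) : Prop := ((n : ℝ) + 1) * binomPMF n α (numTrue v) ≤ ε
  let Q n (v : Fin n → Bool) : ℝ≥0∞ := ENNReal.ofReal (laplaceWeight n (numTrue v))
  have hcover : {ω | ∃ n : ℕ, 1 ≤ n ∧
        ((n : ℝ) + 1) * binomPMF n α (∑ i ∈ Finset.range n, X i ω) ≤ ε} ⊆
      ⋃ n, ⋃ v ∈ firstHitStrings rule n, {ω | ∀ i : Fin n, Y i ω = v i} := by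
    rintro ω ⟨n, -, hn⟩
    rw [sum_range_eq_numTrue (X · ω) (hval · ω)] at hn
    obtain ⟨m, hm⟩ := exists_mem_firstHitStrings rule (Y · ω) ⟨n, hn⟩
    exact Set.mem_iUnion.2 ⟨m, Set.mem_iUnion₂.2 ⟨_, hm, fun _ => rfl⟩⟩
  have hcylinder : ∀ n, ∀ v ∈ firstHitStrings rule n,
      ℙ {ω | ∀ i : Fin n, Y i ω = v i} ≤ ENNReal.ofReal ε * Q n v := by
    intro n v hv
    have hbound :=
      mul_le_mul_of_nonneg_right (mem_filter.1 hv).2 (laplaceWeight_nonneg n (numTrue v))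
    rw [succ_mul_binomPMF_mul_laplaceWeight α (numTrue_le v)] at hbound
    rw [measure_forall_fin_eq_of_iIndepFun hYmeas hYindep hα.1.le hα.2.le hYdist,
      ← ENNReal.ofReal_mul hε.1.le]
    exact ENNReal.ofReal_le_ofReal hbound
  calc _ ≤ _ := measure_mono hcover
    _ ≤ ENNReal.ofReal ε * Q 0 Fin.elim0 :=
      measure_biUnion_firstHitStrings_le rule ℙ _ Q (fun _ => sum_ofReal_laplaceWeight_snoc) _
        hcylinder
    _ = ENNReal.ofReal ε := by simp [Q, laplaceWeight, numTrue]
end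

section
/- If a sequential procedure with stopping time τ based on i.i.d. Bernoulli(p) samples satisfies the uniform resampling risk bound sup_{p∈[0,1]} RR_p ≤ ε for some ε < 1/2 (with RR defined relative to threshold α ∈ (0,1)), and if p is drawn from a prior distribution that puts positive density in a neighborhood of α, then E[τ] = ∞. -/
open MeasureTheory ProbabilityTheory ENNReal

/-!
For `α < p`, a single Bernoulli(α) sample has likelihood at least `α / p` times its Bernoulli(p)
likelihood, so every event determined by the first `n` samples has `μ α`-probability at least
`(α / p) ^ n ≥ 1 - n (p - α) / p` times its `μ p`-probability. For `n ≲ α (1 - 2ε) / (p - α)`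
this factor is at least `2ε`, so the event "stopped by time `n` and decided `p ≤ α`", having
`μ α`-probability at most `ε`, has `μ p`-probability at most `1/2`; since the decision is wrong
under `μ p` with probability at most `ε`, the procedure is still running at time `n` with
probability at least `1/2 - ε`. Hence `E_p[τ] ≳ 1 / (p - α)`, which is not integrable against
a prior dominating Lebesgue measure near `α`.
-/

lemma ProbabilityTheory.iIndepFun.pow_mul_measure_le {Ω ι β : Type*} [MeasurableSpace Ω]
    [Fintype ι] [Countable β] [MeasurableSpace β] [MeasurableSingletonClass β] {m m' : Measure Ω}
    {X : ι → Ω → β} (hm : iIndepFun X m) (hm' : iIndepFun X m') (hX : ∀ i, Measurable (X i))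
    {r : ℝ≥0∞} (hr : ∀ i b, r * m (X i ⁻¹' {b}) ≤ m' (X i ⁻¹' {b})) {A : Set Ω}
    (hA : MeasurableSet[MeasurableSpace.comap (fun ω i ↦ X i ω) inferInstance] A) :
    r ^ Fintype.card ι * m A ≤ m' A := by
  obtain ⟨S, -, rfl⟩ := hA
  have hfiber (x : ι → β) : (fun ω i ↦ X i ω) ⁻¹' {x} = ⋂ i, X i ⁻¹' {x i} := by
    ext ω; simp [funext_iff]
  have hfiber_meas (x : ι → β) (_ : x ∈ S) : MeasurableSet ((fun ω i ↦ X i ω) ⁻¹' {x}) := by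
    rw [hfiber]; exact .iInter fun i ↦ hX i (measurableSet_singleton _)
  rw [← tsum_measure_preimage_singleton S.to_countable hfiber_meas,
    ← tsum_measure_preimage_singleton S.to_countable hfiber_meas, ← ENNReal.tsum_mul_left]
  refine ENNReal.tsum_le_tsum fun x ↦ ?_
  have hsets (i : ι) : MeasurableSet[(inferInstance : MeasurableSpace β).comap (X i)]
      (X i ⁻¹' {(x : ι → β) i}) := ⟨_, measurableSet_singleton _, rfl⟩
  rw [hfiber, hm.meas_iInter hsets, hm'.meas_iInter hsets, ← Finset.card_univ,
    ← Finset.prod_const, ← Finset.prod_mul_distrib]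
  exact Finset.prod_le_prod' fun i _ ↦ hr i _

section Bernoulli

variable {Ω : Type*} [MeasurableSpace Ω] {m : Measure Ω} [IsProbabilityMeasure m] {Y : Ω → ℕ}

lemma measure_preimage_zero_eq_of_le_one (hY : Measurable Y) (hY1 : ∀ ω, Y ω ≤ 1) {p : ℝ}
    (hp : 0 ≤ p) (h : m {ω | Y ω = 1} = ENNReal.ofReal p) :
    m (Y ⁻¹' {0}) = ENNReal.ofReal (1 - p) := by
  have hcompl : Y ⁻¹' {0} = (Y ⁻¹' {1})ᶜ := by
    ext ω; have := hY1 ω; simp only [Set.mem_preimage, Set.mem_singleton_iff, Set.mem_compl_iff]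
    omega
  rw [hcompl, prob_compl_eq_one_sub (hY (measurableSet_singleton 1)),
    show m (Y ⁻¹' {1}) = m {ω | Y ω = 1} from rfl, h,
    ENNReal.ofReal_sub _ hp, ENNReal.ofReal_one]

lemma mul_measure_preimage_singleton_le_of_le_one {m' : Measure Ω} [IsProbabilityMeasure m']
    (hY : Measurable Y) (hY1 : ∀ ω, Y ω ≤ 1) {p q r : ℝ} (hp : 0 ≤ p) (hq : 0 ≤ q) (hr : 0 ≤ r)
    (hrp : r * p ≤ q) (hrq : r * (1 - p) ≤ 1 - q) (h : m {ω | Y ω = 1} = ENNReal.ofReal p)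
    (h' : m' {ω | Y ω = 1} = ENNReal.ofReal q) (b : ℕ) :
    ENNReal.ofReal r * m (Y ⁻¹' {b}) ≤ m' (Y ⁻¹' {b}) := by
  match b with
  | 0 =>
    rw [measure_preimage_zero_eq_of_le_one hY hY1 hp h,
      measure_preimage_zero_eq_of_le_one hY hY1 hq h', ← ENNReal.ofReal_mul hr]
    exact ENNReal.ofReal_le_ofReal hrq
  | 1 =>
    change ENNReal.ofReal r * m {ω | Y ω = 1} ≤ m' {ω | Y ω = 1}
    rw [h, h', ← ENNReal.ofReal_mul hr]
    exact ENNReal.ofReal_le_ofReal hrp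
  | b + 2 =>
    have hempty : Y ⁻¹' {b + 2} = ∅ := by
      ext ω; have := hY1 ω; simp only [Set.mem_preimage, Set.mem_singleton_iff,
        Set.mem_empty_iff_false, iff_false]; omega
    simp [hempty]

end Bernoulli

section StoppingTime

variable {Ω : Type*} [MeasurableSpace Ω] {τ : Ω → ℕ∞}

lemma natCast_add_one_mul_measure_lt_le_lintegral (m : Measure Ω) {n : ℕ}
    (hτ : MeasurableSet {ω | (n : ℕ∞) < τ ω}) :
    (n + 1 : ℝ≥0∞) * m {ω | (n : ℕ∞) < τ ω} ≤ ∫⁻ ω, (τ ω : ℝ≥0∞) ∂m := by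
  rw [← lintegral_indicator_const hτ]
  refine lintegral_mono fun ω ↦ Set.indicator_apply_le (g := fun ω ↦ (τ ω : ℝ≥0∞)) fun hω ↦ ?_
  exact_mod_cast ENat.toENNReal_le.2 (Order.add_one_le_of_lt hω)

lemma ofReal_half_sub_le_measure_lt {P : Measure Ω} [IsProbabilityMeasure P] {D : Ω → Bool}
    {n : ℕ} {ε : ℝ} (hε : 0 ≤ ε) (hwrong : P {ω | D ω = false} ≤ ENNReal.ofReal ε)
    (hstopped : P {ω | τ ω ≤ n ∧ D ω = true} ≤ ENNReal.ofReal (1 / 2)) :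
    ENNReal.ofReal (1 / 2 - ε) ≤ P {ω | (n : ℕ∞) < τ ω} := by
  have hcover : Set.univ ⊆
      {ω | D ω = false} ∪ {ω | τ ω ≤ n ∧ D ω = true} ∪ {ω | (n : ℕ∞) < τ ω} := by
    intro ω _
    cases D ω <;> cases le_or_gt (τ ω) n <;> simp_all
  have hone : 1 ≤ ENNReal.ofReal (ε + 1 / 2) + P {ω | (n : ℕ∞) < τ ω} := calc
    1 = P Set.univ := measure_univ.symm
    _ ≤ P {ω | D ω = false} + P {ω | τ ω ≤ n ∧ D ω = true} + P {ω | (n : ℕ∞) < τ ω} :=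
      (measure_mono hcover).trans <| (measure_union_le _ _).trans <|
        add_le_add_left (measure_union_le _ _) _
    _ ≤ _ := by rw [ENNReal.ofReal_add hε (by norm_num)]; gcongr
  rw [show 1 / 2 - ε = 1 - (ε + 1 / 2) by ring, ENNReal.ofReal_sub _ (by linarith),
    ENNReal.ofReal_one]
  exact tsub_le_iff_left.2 hone

end StoppingTime

lemma lintegral_inv_sub_eq_top {a b : ℝ} (hab : a < b) :
    ∫⁻ x in Set.Ioo a b, ENNReal.ofReal (x - a)⁻¹ = ⊤ := by
  by_contra hfin
  have hint : IntegrableOn (fun x ↦ (x - a)⁻¹) (Set.Ioo a b) := by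
    refine (lintegral_ofReal_ne_top_iff_integrable
      (measurable_id.sub_const a).inv.aestronglyMeasurable ?_).1 hfin
    exact (ae_restrict_iff' measurableSet_Ioo).2 <| .of_forall fun x hx ↦
      inv_nonneg.2 (sub_nonneg.2 hx.1.le)
  have : IntervalIntegrable (fun x ↦ (x - a)⁻¹) volume a b :=
    (intervalIntegrable_iff_integrableOn_Ioo_of_le hab.le).2 hint
  rcases intervalIntegrable_sub_inv_iff.1 this with h | h
  · exact hab.ne h
  · exact h Set.left_mem_uIcc

lemma lintegral_eq_top_of_div_sub_le {π : Measure ℝ} {f : ℝ → ℝ≥0∞} {a b c K : ℝ}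
    (hab : a < b) (hc : 0 < c) (hK : 0 < K)
    (hπ : ∀ s, MeasurableSet s → s ⊆ Set.Ioo a b → ENNReal.ofReal c * volume s ≤ π s)
    (hf : ∀ x ∈ Set.Ioo a b, ENNReal.ofReal (K / (x - a)) ≤ f x) :
    ∫⁻ x, f x ∂π = ⊤ := by
  have hrestrict : (ENNReal.ofReal c • volume).restrict (Set.Ioo a b) ≤ π.restrict (Set.Ioo a b) :=
    Measure.le_iff.2 fun s hs ↦ by
      rw [Measure.restrict_apply hs, Measure.restrict_apply hs, Measure.smul_apply, smul_eq_mul]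
      exact hπ _ (hs.inter measurableSet_Ioo) Set.inter_subset_right
  refine eq_top_iff.2 <| calc
    ⊤ = ENNReal.ofReal c * (ENNReal.ofReal K * ∫⁻ x in Set.Ioo a b, ENNReal.ofReal (x - a)⁻¹) := by
      rw [lintegral_inv_sub_eq_top hab, ENNReal.mul_top (ENNReal.ofReal_pos.2 hK).ne',
        ENNReal.mul_top (ENNReal.ofReal_pos.2 hc).ne']
    _ = ∫⁻ x in Set.Ioo a b, ENNReal.ofReal (K / (x - a)) ∂(ENNReal.ofReal c • volume) := by
      rw [Measure.restrict_smul, lintegral_smul_measure, smul_eq_mul,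
        ← lintegral_const_mul' _ _ ofReal_ne_top]
      simp_rw [← ENNReal.ofReal_mul hK.le, div_eq_mul_inv]
    _ ≤ ∫⁻ x in Set.Ioo a b, ENNReal.ofReal (K / (x - a)) ∂π := lintegral_mono' hrestrict le_rfl
    _ ≤ ∫⁻ x in Set.Ioo a b, f x ∂π := setLIntegral_mono_ae' measurableSet_Ioo (.of_forall hf)
    _ ≤ ∫⁻ x, f x ∂π := setLIntegral_le_lintegral _ _

lemma le_ofReal_half_of_ofReal_mul_le {x : ℝ≥0∞} {a ε : ℝ} (ha : 0 < a) (hεa : 2 * ε ≤ a)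
    (hx : ENNReal.ofReal a * x ≤ ENNReal.ofReal ε) : x ≤ ENNReal.ofReal (1 / 2) := calc
  x ≤ ENNReal.ofReal ε / ENNReal.ofReal a :=
    (ENNReal.le_div_iff_mul_le (.inl (ENNReal.ofReal_pos.2 ha).ne') (.inl ofReal_ne_top)).2
      (by rwa [mul_comm])
  _ = ENNReal.ofReal (ε / a) := (ENNReal.ofReal_div_of_pos ha).symm
  _ ≤ ENNReal.ofReal (1 / 2) := ENNReal.ofReal_le_ofReal <| by
    rw [div_le_iff₀ ha]; linarith

section SequentialTest

variable {Ω : Type*} [MeasurableSpace Ω] {P Q : Measure Ω} [IsProbabilityMeasure P]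
  [IsProbabilityMeasure Q] {X : ℕ → Ω → ℕ} {τ : Ω → ℕ∞} {D : Ω → Bool} {α p ε : ℝ}

lemma ofReal_half_sub_le_measure_lt_of_risk (hX : ∀ i, Measurable (X i))
    (hX1 : ∀ i ω, X i ω ≤ 1) (hP : iIndepFun X P) (hQ : iIndepFun X Q)
    (hPX : ∀ i, P {ω | X i ω = 1} = ENNReal.ofReal p)
    (hQX : ∀ i, Q {ω | X i ω = 1} = ENNReal.ofReal α)
    (hα : 0 < α) (hαp : α < p) (hε : 0 ≤ ε)
    (hPD : P {ω | D ω = false} ≤ ENNReal.ofReal ε) (hQD : Q {ω | D ω = true} ≤ ENNReal.ofReal ε)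
    {n : ℕ} (hdec : MeasurableSet[MeasurableSpace.comap (fun ω (i : Fin n) ↦ X i ω) inferInstance]
      {ω | τ ω ≤ n ∧ D ω = true})
    (hn : n * (p - α) ≤ α * (1 - 2 * ε)) :
    ENNReal.ofReal (1 / 2 - ε) ≤ P {ω | (n : ℕ∞) < τ ω} := by
  have hp : 0 < p := hα.trans hαp
  set r := α / p
  have hr : 0 < r := div_pos hα hp
  have hratio (i : Fin n) (b : ℕ) :
      ENNReal.ofReal r * P (X i ⁻¹' {b}) ≤ Q (X i ⁻¹' {b}) := by
    refine mul_measure_preimage_singleton_le_of_le_one (hX i) (hX1 i) hp.le hα.le hr.le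
      (div_mul_cancel₀ α hp.ne').le ?_ (hPX i) (hQX i) b
    rw [div_mul_eq_mul_div, div_le_iff₀ hp]
    nlinarith
  have hchange := (hP.precomp Fin.val_injective).pow_mul_measure_le
    (hQ.precomp Fin.val_injective) (fun i : Fin n ↦ hX i) hratio hdec
  rw [Fintype.card_fin, ← ENNReal.ofReal_pow hr.le] at hchange
  have hpow : 2 * ε ≤ r ^ n := calc
    2 * ε ≤ 1 + n * (r - 1) := by
      have hε2 : 0 ≤ 1 - 2 * ε := by nlinarith [n.cast_nonneg (α := ℝ)]
      have : n * (1 - r) * p ≤ (1 - 2 * ε) * p := calc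
        n * (1 - r) * p = n * (p - α) := by simp only [r]; field_simp
        _ ≤ (1 - 2 * ε) * p := by nlinarith
      nlinarith [le_of_mul_le_mul_right this hp]
    _ ≤ r ^ n := by simpa using one_add_mul_le_pow (a := r - 1) (by linarith) n
  refine ofReal_half_sub_le_measure_lt hε hPD <|
    le_ofReal_half_of_ofReal_mul_le (pow_pos hr n) hpow <| hchange.trans ?_
  exact (measure_mono fun ω hω ↦ hω.2).trans hQD

lemma ofReal_div_sub_le_lintegral_of_risk (hX : ∀ i, Measurable (X i))
    (hX1 : ∀ i ω, X i ω ≤ 1) (hP : iIndepFun X P) (hQ : iIndepFun X Q)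
    (hPX : ∀ i, P {ω | X i ω = 1} = ENNReal.ofReal p)
    (hQX : ∀ i, Q {ω | X i ω = 1} = ENNReal.ofReal α)
    (hα : 0 < α) (hαp : α < p) (hε : 0 ≤ ε) (hε2 : ε < 1 / 2)
    (hPD : P {ω | D ω = false} ≤ ENNReal.ofReal ε) (hQD : Q {ω | D ω = true} ≤ ENNReal.ofReal ε)
    (hdec : ∀ n : ℕ, MeasurableSet[MeasurableSpace.comap (fun ω (i : Fin n) ↦ X i ω)
      inferInstance] {ω | τ ω ≤ n ∧ D ω = true})
    (hτ : ∀ n : ℕ, MeasurableSet {ω | (n : ℕ∞) < τ ω}) :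
    ENNReal.ofReal (α * (1 - 2 * ε) * (1 / 2 - ε) / (p - α)) ≤ ∫⁻ ω, (τ ω : ℝ≥0∞) ∂P := by
  have hgap : 0 < p - α := sub_pos.2 hαp
  set N := ⌊α * (1 - 2 * ε) / (p - α)⌋₊
  have hN : N * (p - α) ≤ α * (1 - 2 * ε) :=
    (le_div_iff₀ hgap).1 (Nat.floor_le (div_pos (by nlinarith) hgap).le)
  calc ENNReal.ofReal (α * (1 - 2 * ε) * (1 / 2 - ε) / (p - α))
      ≤ ENNReal.ofReal ((N + 1) * (1 / 2 - ε)) := by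
        rw [mul_div_right_comm]
        gcongr
        exact (Nat.lt_floor_add_one _).le
    _ = (N + 1) * ENNReal.ofReal (1 / 2 - ε) := by
        rw [ENNReal.ofReal_mul (by positivity)]; norm_cast
    _ ≤ (N + 1) * P {ω | (N : ℕ∞) < τ ω} := by
        gcongr
        exact ofReal_half_sub_le_measure_lt_of_risk hX hX1 hP hQ hPX hQX hα hαp hε hPD hQD
          (hdec N) hN
    _ ≤ ∫⁻ ω, (τ ω : ℝ≥0∞) ∂P := natCast_add_one_mul_measure_lt_le_lintegral P (hτ N)

end SequentialTest

theorem stmt19_general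
    (Ω : Type*) [MeasurableSpace Ω]
    (μ : ℝ → Measure Ω) (hprob : ∀ p ∈ Set.Icc (0:ℝ) 1, IsProbabilityMeasure (μ p))
    (X : ℕ → Ω → ℕ)
    (hmeas : ∀ i, Measurable (X i))
    (hval : ∀ i ω, X i ω ≤ 1)
    (hindep : ∀ p ∈ Set.Icc (0:ℝ) 1, iIndepFun X (μ p))
    (hdist : ∀ p ∈ Set.Icc (0:ℝ) 1, ∀ i, μ p {ω | X i ω = 1} = ENNReal.ofReal p)
    -- the natural filtration generated by the first `n` samples
    (ℱ : ℕ → MeasurableSpace Ω)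
    (hℱ : ∀ n, ℱ n = MeasurableSpace.comap (fun ω (i : Fin n) => X i ω) inferInstance)
    -- the stopping time and the decision based on the samples up to time `τ`
    (τ : Ω → ℕ∞) (D : Ω → Bool)
    (hstop : ∀ n : ℕ, MeasurableSet[ℱ n] {ω | τ ω ≤ (n : ℕ∞)})
    (hdec : ∀ n : ℕ, MeasurableSet[ℱ n] {ω | τ ω ≤ (n : ℕ∞) ∧ D ω = true})
    -- uniform bound on the resampling risk at threshold `α` by `ε < 1/2`
    (α ε : ℝ) (hα : α ∈ Set.Ioo (0:ℝ) 1) (hε : 0 ≤ ε) (hε2 : ε < 1 / 2)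
    (hRR : ∀ p ∈ Set.Icc (0:ℝ) 1,
      (if p ≤ α then μ p {ω | D ω = true} else μ p {ω | D ω = false})
        ≤ ENNReal.ofReal ε)
    -- a prior on `p` with positive density in a neighbourhood of `α`
    (π : Measure ℝ)
    (hπdens : ∃ c > (0:ℝ), ∃ δ > (0:ℝ), ∀ s : Set ℝ, MeasurableSet s →
      s ⊆ Set.Ioo (α - δ) (α + δ) → ENNReal.ofReal c * MeasureTheory.volume s ≤ π s) :
    ∫⁻ p, (∫⁻ ω, (τ ω : ℝ≥0∞) ∂(μ p)) ∂π = ⊤ := by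
  obtain ⟨c, hc, δ, hδ, hπ⟩ := hπdens
  obtain ⟨hα0, hα1⟩ := hα
  have hαI : α ∈ Set.Icc (0:ℝ) 1 := ⟨hα0.le, hα1.le⟩
  have := hprob α hαI
  have hτ (n : ℕ) : MeasurableSet {ω | (n : ℕ∞) < τ ω} := by
    have hℱle : ℱ n ≤ ‹MeasurableSpace Ω› := by
      rw [hℱ n]; exact (measurable_pi_lambda (fun ω (i : Fin n) ↦ X i ω) fun i ↦ hmeas i).comap_le
    simpa only [Set.compl_ofPred, not_le] using (hℱle _ (hstop n)).compl
  refine lintegral_eq_top_of_div_sub_le (K := α * (1 - 2 * ε) * (1 / 2 - ε))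
    (lt_min (by linarith) hα1 : α < min (α + δ) 1) hc
    (mul_pos (mul_pos hα0 (by linarith)) (by linarith))
    (fun s hs hsub ↦ hπ s hs <| hsub.trans <| Set.Ioo_subset_Ioo (by linarith) (min_le_left _ _))
    fun p hp ↦ ?_
  have hpI : p ∈ Set.Icc (0:ℝ) 1 := ⟨by linarith [hp.1], hp.2.le.trans (min_le_right _ _)⟩
  have := hprob p hpI
  refine ofReal_div_sub_le_lintegral_of_risk hmeas hval (hindep p hpI) (hindep α hαI)
    (hdist p hpI) (hdist α hαI) hα0 hp.1 hε hε2 ?_ ?_ (fun n ↦ hℱ n ▸ hdec n) hτ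
  · simpa [not_le.2 hp.1] using hRR p hpI
  · simpa using hRR α hαI

/-- Wald-type lower bound: a sequential procedure observing i.i.d. Bernoulli(p) samples
(`μ p` is the law of the sample path under success probability `p`), with stopping time `τ`
adapted to the natural filtration of the samples and decision `D` (`true` = decide `p > α`)
determined by the samples observed up to time `τ`, which has resampling risk uniformly
bounded by some `ε < 1/2`, must have infinite expected stopping time under any prior `π`
with positive density in a neighbourhood of `α`. -/
theorem stmt19
    (Ω : Type*) [MeasurableSpace Ω]
    (μ : ℝ → Measure Ω) (hprob : ∀ p ∈ Set.Icc (0:ℝ) 1, IsProbabilityMeasure (μ p))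
    (X : ℕ → Ω → ℕ)
    (hmeas : ∀ i, Measurable (X i))
    (hval : ∀ i ω, X i ω ≤ 1)
    (hindep : ∀ p ∈ Set.Icc (0:ℝ) 1, iIndepFun X (μ p))
    (hdist : ∀ p ∈ Set.Icc (0:ℝ) 1, ∀ i, μ p {ω | X i ω = 1} = ENNReal.ofReal p)
    -- the natural filtration generated by the first `n` samples
    (ℱ : ℕ → MeasurableSpace Ω)
    (hℱ : ∀ n, ℱ n = MeasurableSpace.comap (fun ω (i : Fin n) => X i ω) inferInstance)
    -- the stopping time and the decision based on the samples up to time `τ`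
    (τ : Ω → ℕ∞) (D : Ω → Bool)
    (hstop : ∀ n : ℕ, MeasurableSet[ℱ n] {ω | τ ω ≤ (n : ℕ∞)})
    (hdec : ∀ n : ℕ, MeasurableSet[ℱ n] {ω | τ ω ≤ (n : ℕ∞) ∧ D ω = true})
    -- uniform bound on the resampling risk at threshold `α` by `ε < 1/2`
    (α ε : ℝ) (hα : α ∈ Set.Ioo (0:ℝ) 1) (hε : 0 ≤ ε) (hε2 : ε < 1 / 2)
    (hRR : ∀ p ∈ Set.Icc (0:ℝ) 1,
      (if p ≤ α then μ p {ω | D ω = true} else μ p {ω | D ω = false})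
        ≤ ENNReal.ofReal ε)
    -- a prior on `p` with positive density in a neighbourhood of `α`
    (π : Measure ℝ) [IsProbabilityMeasure π] (hπsupp : π (Set.Icc (0:ℝ) 1)ᶜ = 0)
    (hπdens : ∃ c > (0:ℝ), ∃ δ > (0:ℝ), ∀ s : Set ℝ, MeasurableSet s →
      s ⊆ Set.Ioo (α - δ) (α + δ) → ENNReal.ofReal c * MeasureTheory.volume s ≤ π s) :
    ∫⁻ p, (∫⁻ ω, (τ ω : ℝ≥0∞) ∂(μ p)) ∂π = ⊤ :=
  stmt19_general Ω μ hprob X hmeas hval hindep hdist ℱ hℱ τ D hstop hdec α ε hα hε hε2 hRR π hπdens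
end
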